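/- In the proxy setup (without requiring p(d|c) ≠ p(d|c')): suppose p(c) = 1/2 and p(a|c) = 1−p(a|c') = p(d|c) = 1−p(d|c') ≥ 1/2. If E[Y|a,c] − E[Y|a,c'] ≥ E[Y|a',c'] − E[Y|a',c] ≥ 0, then E[Y|a,d] − E[Y|a,d'] ≥ E[Y|a',d'] − E[Y|a',d] ≥ 0. -/

import Mathlib

/-- p(c | x, v) = p(x|c) p(v|c) p(c) / (p(x|c) p(v|c) p(c) + p(x|c') p(v|c') p(c')),
with p(c') = 1 - p(c). -/
noncomputable def pcGiven (pxc pxc' pvc pvc' pc : ℝ) : ℝ :=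
  pxc * pvc * pc / (pxc * pvc * pc + pxc' * pvc' * (1 - pc))

/-- E[Y | x, v] = E[Y|x,c] * p(c|x,v) + E[Y|x,c'] * (1 - p(c|x,v)). -/
noncomputable def condExp (yc yc' w : ℝ) : ℝ := yc * w + yc' * (1 - w)

/-!
With `p(c) = 1/2` and `p = p(a|c) = p(a'|c') = p(d|c) = p(d'|c')`, the evidence of `a` and `d'`
(and of `a'` and `d`) cancels, so `p(c|a,d') = p(c|a',d) = 1/2`, while
`p(c|a,d) = 1 - p(c|a',d') = w` with `w = p² / (p² + (1-p)²) ≥ 1/2`. Since `E[Y|x,·]` is affine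
in the posterior, the two contrasts are `(E[Y|a,c] - E[Y|a,c']) (w - 1/2)` and
`(E[Y|a',c'] - E[Y|a',c]) (w - 1/2)`.
-/

lemma condExp_sub_condExp (yc yc' w w' : ℝ) :
    condExp yc yc' w - condExp yc yc' w' = (yc - yc') * (w - w') := by
  unfold condExp; ring

section Posterior

variable {x x' v v' pc : ℝ}

lemma pcGiven_eq_prior_of_mul_eq (h : x * v = x' * v') (h0 : x' * v' ≠ 0) :
    pcGiven x x' v v' pc = pc := by
  have hden : x' * v' * pc + x' * v' * (1 - pc) = x' * v' := by ring
  rw [pcGiven, h, hden, mul_div_cancel_left₀ pc h0]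

lemma pcGiven_swap (h : x * v * pc + x' * v' * (1 - pc) ≠ 0) :
    pcGiven x' x v' v (1 - pc) = 1 - pcGiven x x' v v' pc := by
  have hden : x' * v' * (1 - pc) + x * v * (1 - (1 - pc)) = x * v * pc + x' * v' * (1 - pc) := by
    ring
  rw [pcGiven, pcGiven, hden, eq_sub_iff_add_eq, ← add_div, div_eq_one_iff_eq h]
  ring

lemma le_pcGiven_of_mul_le (hpc0 : 0 < pc) (hpc1 : pc ≤ 1) (hx'v' : 0 ≤ x' * v')
    (hxv : 0 < x * v) (h : x' * v' ≤ x * v) :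
    pc ≤ pcGiven x x' v v' pc := by
  have hden : 0 < x * v * pc + x' * v' * (1 - pc) := by
    have : 0 ≤ x' * v' * (1 - pc) := mul_nonneg hx'v' (by linarith)
    have : 0 < x * v * pc := mul_pos hxv hpc0
    linarith
  rw [pcGiven, le_div_iff₀ hden]
  nlinarith [mul_nonneg hpc0.le (sub_nonneg.2 hpc1)]

end Posterior

theorem stmt13_general (pc pdc pdc' pac pac' Yac Yac' Ybc Ybc' : ℝ)
    (hpac1 : pac < 1)
    (hc : pc = 1/2)
    (h1 : pac = 1 - pac') (h2 : pac = pdc) (h3 : pdc = 1 - pdc') (h4 : 1/2 ≤ pac)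
    (hY1 : Yac - Yac' ≥ Ybc' - Ybc) (hY2 : Ybc' - Ybc ≥ 0) :
    condExp Yac Yac' (pcGiven pac pac' pdc pdc' pc) - condExp Yac Yac' (pcGiven pac pac' (1 - pdc) (1 - pdc') pc) ≥ condExp Ybc Ybc' (pcGiven (1 - pac) (1 - pac') (1 - pdc) (1 - pdc') pc) - condExp Ybc Ybc' (pcGiven (1 - pac) (1 - pac') pdc pdc' pc) ∧
    condExp Ybc Ybc' (pcGiven (1 - pac) (1 - pac') (1 - pdc) (1 - pdc') pc) - condExp Ybc Ybc' (pcGiven (1 - pac) (1 - pac') pdc pdc' pc) ≥ 0 := by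
  obtain rfl : pac' = 1 - pac := by linarith
  obtain rfl : pdc' = 1 - pac := by linarith
  subst h2 hc
  simp only [sub_sub_cancel]
  have hp : 0 < pac := by linarith
  have hq : 0 < 1 - pac := by linarith
  have had' : pcGiven pac (1 - pac) (1 - pac) pac (1/2) = 1/2 :=
    pcGiven_eq_prior_of_mul_eq (by ring) (by positivity)
  have ha'd : pcGiven (1 - pac) pac pac (1 - pac) (1/2) = 1/2 :=
    pcGiven_eq_prior_of_mul_eq (by ring) (by positivity)
  set w := pcGiven pac (1 - pac) pac (1 - pac) (1/2)
  have ha'd' : pcGiven (1 - pac) pac (1 - pac) pac (1/2) = 1 - w := by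
    rw [← pcGiven_swap (by positivity)]
    norm_num
  have hw : 0 ≤ w - 1/2 := sub_nonneg.2 <|
    le_pcGiven_of_mul_le (by norm_num) (by norm_num) (by positivity) (by positivity) (by nlinarith)
  rw [had', ha'd, ha'd', condExp_sub_condExp, condExp_sub_condExp]
  constructor
  · linarith [mul_le_mul_of_nonneg_right hY1 hw]
  · linarith [mul_nonneg hY2 hw]

/-- Proxy setup: if p(c) = 1/2, p(a|c) = p(a'|c') = p(d|c) = p(d'|c') ≥ 1/2 and
E[Y|a,c] - E[Y|a,c'] ≥ E[Y|a',c'] - E[Y|a',c] ≥ 0, then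
E[Y|a,d] - E[Y|a,d'] ≥ E[Y|a',d'] - E[Y|a',d] ≥ 0. -/
theorem stmt13 (pc pdc pdc' pac pac' Yac Yac' Ybc Ybc' : ℝ)
    (hpc0 : 0 < pc) (hpc1 : pc < 1)
    (hpdc0 : 0 < pdc) (hpdc1 : pdc < 1) (hpdc'0 : 0 < pdc') (hpdc'1 : pdc' < 1)
    (hpac0 : 0 < pac) (hpac1 : pac < 1) (hpac'0 : 0 < pac') (hpac'1 : pac' < 1)
    (hc : pc = 1/2)
    (h1 : pac = 1 - pac') (h2 : pac = pdc) (h3 : pdc = 1 - pdc') (h4 : 1/2 ≤ pac)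
    (hY1 : Yac - Yac' ≥ Ybc' - Ybc) (hY2 : Ybc' - Ybc ≥ 0) :
    condExp Yac Yac' (pcGiven pac pac' pdc pdc' pc) - condExp Yac Yac' (pcGiven pac pac' (1 - pdc) (1 - pdc') pc) ≥ condExp Ybc Ybc' (pcGiven (1 - pac) (1 - pac') (1 - pdc) (1 - pdc') pc) - condExp Ybc Ybc' (pcGiven (1 - pac) (1 - pac') pdc pdc' pc) ∧
    condExp Ybc Ybc' (pcGiven (1 - pac) (1 - pac') (1 - pdc) (1 - pdc') pc) - condExp Ybc Ybc' (pcGiven (1 - pac) (1 - pac') pdc pdc' pc) ≥ 0 :=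
  stmt13_general pc pdc pdc' pac pac' Yac Yac' Ybc Ybc' hpac1 hc h1 h2 h3 h4 hY1 hY2
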